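/- arXiv:1309.7268 — 2 statements merged into one kernel-verified Lean document; each statement's English description precedes it below -/
import Mathlib

section
/- The d-th root of the variance of D_d converges to 1/e²: lim_{d→∞} (Var(D_d))^{1/d} = 1/e². -/
open MeasureTheory ProbabilityTheory Real Filter Finset

/-- The Beta(a,b) distribution on ℝ: density x^(a-1)(1-x)^(b-1)/B(a,b) on (0,1),
where B(a,b) = Γ(a)Γ(b)/Γ(a+b). -/
noncomputable def betaMeasure (a b : ℝ) : Measure ℝ :=
  volume.withDensity fun x =>
    ENNReal.ofReal (if x ∈ Set.Ioo (0 : ℝ) 1 then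
      x ^ (a - 1) * (1 - x) ^ (b - 1) / (Real.Gamma a * Real.Gamma b / Real.Gamma (a + b))
    else 0)

/-- `X` has the Beta(a,b) distribution under `P`. -/
def HasBetaDist {Ω : Type*} [MeasurableSpace Ω] (P : Measure Ω) (X : Ω → ℝ) (a b : ℝ) : Prop :=
  Measurable X ∧ Measure.map X P = _root_.betaMeasure a b

/-!
By independence and the Beta moments `E X = a/(a+b)`, `E X² = a(a+1)/((a+b)(a+b+1))`,
`E[D_d] = ∏ (j+1)/(d+1)` and `E[D_d²] = ∏ (j+1)(j+3)/((d+1)(d+3))`. Every factor of `E[D_d]²`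
is at most the matching factor of `E[D_d²]`, and the factor `j = 1` is at most `5/6` of it, so
`E[D_d²]/6 ≤ Var D_d ≤ E[D_d²]`; constant factors disappear under `d`-th roots.
Finally `E[D_{d+1}²] / E[D_d²] = ((d+1)(d+3)/((d+2)(d+4)))^d → e⁻²`, and by Cesàro averaging of
the logarithms a limit of ratios is also the limit of `d`-th roots.
-/

open scoped Topology

lemma betaMeasure_eq_withDensity_betaPDF (a b : ℝ) :
    _root_.betaMeasure a b = volume.withDensity (betaPDF a b) := by
  unfold _root_.betaMeasure betaPDF betaPDFReal beta
  simp only [Set.mem_Ioo]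
  congr with x
  split_ifs <;> simp [div_eq_inv_mul, mul_assoc]

lemma measurable_betaPDF (α β : ℝ) : Measurable (betaPDF α β) :=
  (measurable_betaPDFReal α β).ennreal_ofReal

lemma betaPDFReal_nonneg {α β : ℝ} (hα : 0 < α) (hβ : 0 < β) (x : ℝ) :
    0 ≤ betaPDFReal α β x := by
  by_cases hx : 0 < x ∧ x < 1
  · exact (betaPDFReal_pos hx.1 hx.2 hα hβ).le
  · simp [betaPDFReal, hx]

lemma integral_betaPDFReal {α β : ℝ} (hα : 0 < α) (hβ : 0 < β) :
    ∫ x, betaPDFReal α β x = 1 := by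
  rw [integral_eq_lintegral_of_nonneg_ae (.of_forall (betaPDFReal_nonneg hα hβ))
    (measurable_betaPDFReal α β).aestronglyMeasurable]
  simp [← betaPDF.eq_1, lintegral_betaPDF_eq_one hα hβ]

lemma pow_mul_betaPDFReal {α β : ℝ} (hα : 0 < α) (hβ : 0 < β) (n : ℕ) (x : ℝ) :
    x ^ n * betaPDFReal α β x = beta (α + n) β / beta α β * betaPDFReal (α + n) β x := by
  have := (beta_pos (by positivity : 0 < α + n) hβ).ne'
  unfold betaPDFReal
  split_ifs with hx
  · rw [add_sub_right_comm, Real.rpow_add hx.1, Real.rpow_natCast]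
    field_simp
  · simp

lemma integral_pow_betaMeasure {α β : ℝ} (hα : 0 < α) (hβ : 0 < β) (n : ℕ) :
    ∫ x, x ^ n ∂_root_.betaMeasure α β = beta (α + n) β / beta α β := by
  rw [betaMeasure_eq_withDensity_betaPDF,
    integral_withDensity_eq_integral_toReal_smul (measurable_betaPDF α β)
      (.of_forall fun _ ↦ ENNReal.ofReal_lt_top)]
  simp_rw [betaPDF, ENNReal.toReal_ofReal (betaPDFReal_nonneg hα hβ _), smul_eq_mul,
    mul_comm _ (_ ^ n), pow_mul_betaPDFReal hα hβ, integral_const_mul,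
    integral_betaPDFReal (by positivity : 0 < α + n) hβ, mul_one]

lemma beta_add_one_div_beta {α β : ℝ} (hα : 0 < α) (hβ : 0 < β) :
    beta (α + 1) β / beta α β = α / (α + β) := by
  have := Real.Gamma_pos_of_pos hα
  have := Real.Gamma_pos_of_pos hβ
  have := Real.Gamma_pos_of_pos (add_pos hα hβ)
  rw [beta, beta, add_right_comm, Real.Gamma_add_one hα.ne', Real.Gamma_add_one (by positivity)]
  field_simp

namespace HasBetaDist

variable {Ω : Type*} [MeasurableSpace Ω] {P : Measure Ω} {X : Ω → ℝ} {a b : ℝ}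

lemma integral_pow (h : HasBetaDist P X a b) (ha : 0 < a) (hb : 0 < b) (n : ℕ) :
    ∫ ω, X ω ^ n ∂P = beta (a + n) b / beta a b := by
  have hpow : Measurable fun x : ℝ ↦ x ^ n := by fun_prop
  rw [← integral_pow_betaMeasure ha hb, ← h.2,
    integral_map h.1.aemeasurable hpow.aestronglyMeasurable]

lemma integral_eq (h : HasBetaDist P X a b) (ha : 0 < a) (hb : 0 < b) :
    ∫ ω, X ω ∂P = a / (a + b) := by
  simpa [beta_add_one_div_beta ha hb] using h.integral_pow ha hb 1

lemma integral_sq (h : HasBetaDist P X a b) (ha : 0 < a) (hb : 0 < b) :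
    ∫ ω, X ω ^ 2 ∂P = a * (a + 1) / ((a + b) * (a + b + 1)) := by
  have hne : beta (a + 1) b ≠ 0 := (beta_pos (by positivity) hb).ne'
  rw [h.integral_pow ha hb, Nat.cast_ofNat, ← div_mul_div_cancel₀ hne,
    show a + 2 = a + 1 + 1 by ring, beta_add_one_div_beta (by positivity) hb,
    beta_add_one_div_beta ha hb, add_right_comm]
  field_simp

lemma ae_mem_Icc (h : HasBetaDist P X a b) : ∀ᵐ ω ∂P, X ω ∈ Set.Icc 0 1 := by
  rw [← ae_map_iff h.1.aemeasurable (p := (· ∈ Set.Icc 0 1)) measurableSet_Icc, h.2,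
    betaMeasure_eq_withDensity_betaPDF, ae_withDensity_iff (measurable_betaPDF a b)]
  refine .of_forall fun x hx ↦ ⟨not_lt.1 fun hx0 ↦ hx ?_, not_lt.1 fun hx1 ↦ hx ?_⟩
  · exact betaPDF_eq_zero_of_nonpos hx0.le
  · exact betaPDF_eq_zero_of_one_le hx1.le

end HasBetaDist

section Independence

variable {Ω ι : Type*} [MeasurableSpace Ω] {μ : Measure Ω} {p : ι → Prop} {s : Finset ι}
  {X : ι → Ω → ℝ}

lemma ProbabilityTheory.iIndepFun.integral_finset_prod_of_mem_iff (hs : ∀ i, i ∈ s ↔ p i)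
    (hX : iIndepFun (fun i : Subtype p ↦ X i) μ) (mX : ∀ i ∈ s, AEStronglyMeasurable (X i) μ) :
    ∫ ω, ∏ i ∈ s, X i ω ∂μ = ∏ i ∈ s, ∫ ω, X i ω ∂μ := by
  let _ : Fintype (Subtype p) := Fintype.subtype s hs
  simp_rw [Finset.prod_subtype s hs]
  exact hX.integral_fun_prod_eq_prod_integral fun i ↦ mX i ((hs i).2 i.2)

lemma ProbabilityTheory.iIndepFun.variance_finset_prod_of_mem_iff [IsProbabilityMeasure μ]
    (hs : ∀ i, i ∈ s ↔ p i) (hX : iIndepFun (fun i : Subtype p ↦ X i) μ)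
    (mX : ∀ i ∈ s, Measurable (X i)) (hmem : MemLp (fun ω ↦ ∏ i ∈ s, X i ω) 2 μ) :
    variance (fun ω ↦ ∏ i ∈ s, X i ω) μ =
      ∏ i ∈ s, ∫ ω, X i ω ^ 2 ∂μ - (∏ i ∈ s, ∫ ω, X i ω ∂μ) ^ 2 := by
  have hX2 : iIndepFun (fun i : Subtype p ↦ fun ω ↦ X i ω ^ 2) μ :=
    hX.comp (fun _ x ↦ x ^ 2) fun _ ↦ by fun_prop
  rw [variance_eq_sub hmem, ← hX.integral_finset_prod_of_mem_iff hs
    fun i hi ↦ (mX i hi).aestronglyMeasurable, ← hX2.integral_finset_prod_of_mem_iff hs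
    fun i hi ↦ ((mX i hi).pow_const 2).aestronglyMeasurable]
  simp [Finset.prod_pow]

end Independence

lemma Finset.prod_le_const_mul_prod {ι R : Type*} [CommSemiring R] [PartialOrder R]
    [IsOrderedRing R] {s : Finset ι} {f g : ι → R} {i : ι} {c : R} (hi : i ∈ s)
    (h0 : ∀ j ∈ s, 0 ≤ f j) (hfg : ∀ j ∈ s, f j ≤ g j) (hc : f i ≤ c * g i) :
    ∏ j ∈ s, f j ≤ c * ∏ j ∈ s, g j := by
  classical
  have h0' : ∀ j ∈ s.erase i, 0 ≤ f j := fun j hj ↦ h0 j (mem_of_mem_erase hj)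
  rw [← mul_prod_erase s f hi, ← mul_prod_erase s g hi, ← mul_assoc]
  exact mul_le_mul hc (prod_le_prod h0' fun j hj ↦ hfg j (mem_of_mem_erase hj))
    (prod_nonneg h0') ((h0 i hi).trans hc)

lemma tendsto_rpow_inv_of_tendsto_div {a : ℕ → ℝ} (ha : ∀ n, 0 < a n) {L : ℝ} (hL : 0 < L)
    (h : Tendsto (fun n ↦ a (n + 1) / a n) atTop (𝓝 L)) :
    Tendsto (fun n : ℕ ↦ a n ^ (n : ℝ)⁻¹) atTop (𝓝 L) := by
  have hsum : ∀ n, ∑ i ∈ range n, log (a (i + 1) / a i) = log (a n) - log (a 0) := fun n ↦ by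
    simp_rw [log_div (ha _).ne' (ha _).ne']
    exact sum_range_sub (fun i ↦ log (a i)) n
  have hinv : Tendsto (fun n : ℕ ↦ (n : ℝ)⁻¹) atTop (𝓝 0) :=
    tendsto_inv_atTop_zero.comp tendsto_natCast_atTop_atTop
  have hlog : Tendsto (fun n : ℕ ↦ (n : ℝ)⁻¹ * log (a n)) atTop (𝓝 (log L)) := by
    have := (h.log hL.ne').cesaro.add (hinv.mul_const (log (a 0)))
    rw [zero_mul, add_zero] at this
    refine this.congr fun n ↦ ?_
    rw [hsum]
    ring
  have := (continuous_exp.tendsto _).comp hlog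
  rw [exp_log hL] at this
  refine this.congr fun n ↦ ?_
  rw [Function.comp_apply, rpow_def_of_pos (ha n), mul_comm]

lemma tendsto_rpow_inv_of_const_mul_le_of_le {a b : ℕ → ℝ} {c L : ℝ} (hc : 0 < c)
    (ha : ∀ n, 0 ≤ a n) (hlim : Tendsto (fun n : ℕ ↦ a n ^ (n : ℝ)⁻¹) atTop (𝓝 L))
    (hlow : ∀ᶠ n in atTop, c * a n ≤ b n) (hup : ∀ᶠ n in atTop, b n ≤ a n) :
    Tendsto (fun n : ℕ ↦ b n ^ (n : ℝ)⁻¹) atTop (𝓝 L) := by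
  have hc' : Tendsto (fun n : ℕ ↦ c ^ (n : ℝ)⁻¹) atTop (𝓝 1) := by
    have := (continuousAt_const_rpow hc.ne').tendsto.comp
      (tendsto_inv_atTop_zero.comp tendsto_natCast_atTop_atTop)
    rwa [rpow_zero] at this
  have hlim' : Tendsto (fun n : ℕ ↦ (c * a n) ^ (n : ℝ)⁻¹) atTop (𝓝 L) := by
    simpa [mul_rpow hc.le (ha _)] using hc'.mul hlim
  refine tendsto_of_tendsto_of_tendsto_of_le_of_le' hlim' hlim ?_ ?_
  · filter_upwards [hlow] with n hn
    exact rpow_le_rpow (mul_nonneg hc.le (ha n)) hn (by positivity)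
  · filter_upwards [hlow, hup] with n hlo hn
    exact rpow_le_rpow ((mul_nonneg hc.le (ha n)).trans hlo) hn (by positivity)

noncomputable def detMean (d : ℕ) : ℝ :=
  ∏ j ∈ Icc 1 (d - 1), ((j : ℝ) + 1) / (d + 1)

noncomputable def detSecondMoment (d : ℕ) : ℝ :=
  ∏ j ∈ Icc 1 (d - 1), ((j : ℝ) + 1) * (j + 3) / ((d + 1) * (d + 3))

lemma variance_prod_of_hasBetaDist {Ω : Type*} [MeasurableSpace Ω] {P : Measure Ω}
    [IsProbabilityMeasure P] {X : ℕ → Ω → ℝ} {d : ℕ}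
    (hindep : iIndepFun (fun j : {j : ℕ // 1 ≤ j ∧ j ≤ d - 1} ↦ X j) P)
    (hX : ∀ j ∈ Icc 1 (d - 1), HasBetaDist P (X j) (((j : ℝ) + 1) / 2) (((d : ℝ) - j) / 2)) :
    variance (fun ω ↦ ∏ j ∈ Icc 1 (d - 1), X j ω) P = detSecondMoment d - detMean d ^ 2 := by
  have hb : ∀ j ∈ Icc 1 (d - 1), 0 < ((d : ℝ) - j) / 2 := fun j hj ↦ by
    have : j < d := by grind
    have : (j : ℝ) < d := by exact_mod_cast this
    linarith
  have hbound : ∀ᵐ ω ∂P, ‖∏ j ∈ Icc 1 (d - 1), X j ω‖ ≤ 1 := by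
    filter_upwards [(eventually_all_finset _).2 fun j hj ↦ (hX j hj).ae_mem_Icc] with ω hω
    rw [norm_prod]
    exact prod_le_one (fun _ _ ↦ norm_nonneg _) fun j hj ↦ by
      rw [Real.norm_of_nonneg (hω j hj).1]; exact (hω j hj).2
  have hmeas : Measurable fun ω ↦ ∏ j ∈ Icc 1 (d - 1), X j ω :=
    Finset.measurable_prod _ fun j hj ↦ (hX j hj).1
  rw [hindep.variance_finset_prod_of_mem_iff (fun _ ↦ mem_Icc) (fun j hj ↦ (hX j hj).1)
    (.of_bound hmeas.aestronglyMeasurable 1 hbound), detSecondMoment, detMean]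
  have hab : ∀ j : ℕ, ((j : ℝ) + 1) / 2 + ((d : ℝ) - j) / 2 = ((d : ℝ) + 1) / 2 := fun _ ↦ by
    ring
  congr 1
  · refine prod_congr rfl fun j hj ↦ ?_
    rw [(hX j hj).integral_sq (by positivity) (hb j hj), hab]
    field_simp
    ring
  · congr 1
    refine prod_congr rfl fun j hj ↦ ?_
    rw [(hX j hj).integral_eq (by positivity) (hb j hj), hab]
    field_simp

lemma detMean_sq_le {d : ℕ} (hd : 2 ≤ d) : detMean d ^ 2 ≤ 5 / 6 * detSecondMoment d := by
  have hd' : (2 : ℝ) ≤ d := by exact_mod_cast hd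
  rw [detMean, detSecondMoment, ← prod_pow]
  refine prod_le_const_mul_prod (i := 1) (mem_Icc.2 ⟨le_rfl, by omega⟩) (fun _ _ ↦ by positivity)
    (fun j hj ↦ ?_) ?_
  · have : (j : ℝ) ≤ d := by exact_mod_cast (mem_Icc.1 hj).2.trans (Nat.sub_le d 1)
    rw [div_pow, div_le_div_iff₀ (by positivity) (by positivity)]
    have : (0 : ℝ) ≤ (j + 1) * (d + 1) * (d - j) := by
      have : (0 : ℝ) ≤ d - j := by linarith
      positivity
    nlinarith
  · rw [div_pow, ← mul_div_assoc, div_le_div_iff₀ (by positivity) (by positivity)]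
    push_cast
    nlinarith

lemma detSecondMoment_pos (d : ℕ) : 0 < detSecondMoment d :=
  prod_pos fun _ _ ↦ by positivity

lemma detSecondMoment_succ {d : ℕ} (hd : 1 ≤ d) :
    detSecondMoment (d + 1) =
      detSecondMoment d * (((d : ℝ) + 1) * (d + 3) / ((d + 2) * (d + 4))) ^ d := by
  obtain ⟨k, rfl⟩ := Nat.exists_eq_add_of_le' hd
  simp only [detSecondMoment, prod_div_distrib, prod_const, Nat.card_Icc, Nat.add_sub_cancel]
  rw [prod_Icc_succ_top (by omega)]
  generalize ∏ j ∈ Icc 1 k, ((j : ℝ) + 1) * (j + 3) = p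
  push_cast
  rw [div_pow]
  field_simp
  ring

lemma tendsto_detSecondMoment_succ_div :
    Tendsto (fun d ↦ detSecondMoment (d + 1) / detSecondMoment d) atTop (𝓝 (exp (-2))) := by
  have hlin : Tendsto (fun n : ℕ ↦ (n : ℝ) * -((2 * n + 5) / ((n + 2) * (n + 4)))) atTop
      (𝓝 (-2)) := by
    have h := fun C : ℝ ↦ tendsto_const_div_atTop_nhds_zero_nat C
    have := (((tendsto_const_nhds (x := (2 : ℝ))).add (h 5)).div
      (((tendsto_const_nhds (x := (1 : ℝ))).add (h 2)).mul
        ((tendsto_const_nhds (x := (1 : ℝ))).add (h 4))) (by norm_num)).neg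
    simp only [add_zero, mul_one, div_one, Pi.div_apply] at this
    refine this.congr' ?_
    filter_upwards [eventually_ne_atTop 0] with n hn
    field_simp
  refine (tendsto_one_add_pow_exp_of_tendsto hlin).congr' ?_
  filter_upwards [eventually_ge_atTop 1] with d hd
  rw [detSecondMoment_succ hd, mul_div_cancel_left₀ _ (detSecondMoment_pos d).ne']
  congr 1
  field_simp
  ring

lemma tendsto_detSecondMoment_rpow_inv :
    Tendsto (fun d : ℕ ↦ detSecondMoment d ^ (d : ℝ)⁻¹) atTop (𝓝 (exp (-2))) :=
  tendsto_rpow_inv_of_tendsto_div detSecondMoment_pos (exp_pos _) tendsto_detSecondMoment_succ_div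

theorem stmt8
    {Ω : Type*} [MeasurableSpace Ω] (P : Measure Ω) [IsProbabilityMeasure P]
    (X : ℕ → ℕ → Ω → ℝ)
    (hindep : ∀ d : ℕ, 2 ≤ d →
      iIndepFun
        (fun j : {j : ℕ // 1 ≤ j ∧ j ≤ d - 1} => X d j) P)
    (hX : ∀ d j : ℕ, 2 ≤ d → 1 ≤ j → j ≤ d - 1 →
      HasBetaDist P (X d j) (((j : ℝ) + 1) / 2) (((d : ℝ) - (j : ℝ)) / 2)) :
    Tendsto (fun d : ℕ => (variance (fun ω => (∏ j ∈ Finset.Icc 1 (d - 1), X d j ω)) P) ^ ((d : ℝ)⁻¹))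
      atTop (nhds (Real.exp (-2))) := by
  have hvar : ∀ᶠ d in atTop, variance (fun ω ↦ ∏ j ∈ Icc 1 (d - 1), X d j ω) P =
      detSecondMoment d - detMean d ^ 2 := by
    filter_upwards [eventually_ge_atTop 2] with d hd
    exact variance_prod_of_hasBetaDist (hindep d hd) fun j hj ↦
      hX d j hd (mem_Icc.1 hj).1 (mem_Icc.1 hj).2
  refine tendsto_rpow_inv_of_const_mul_le_of_le (c := 1 / 6) (by norm_num)
    (fun d ↦ (detSecondMoment_pos d).le) tendsto_detSecondMoment_rpow_inv ?_ ?_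
  · filter_upwards [hvar, eventually_ge_atTop 2] with d hd h2
    linarith [detMean_sq_le h2]
  · filter_upwards [hvar] with d hd
    linarith [sq_nonneg (detMean d)]
end

section
/- For every integer d ≥ 2, the variance of the logarithm of D_d satisfies Var(ln D_d) = ∑_{j=1}^{d−1} ( ψ₁((j+1)/2) − ψ₁((d+1)/2) ), where ψ₁ is the trigamma function. -/
open MeasureTheory ProbabilityTheory Real Filter Finset

/-- The digamma function ψ = (log Γ)'. -/
noncomputable def digamma (x : ℝ) : ℝ := deriv (fun y => Real.log (Real.Gamma y)) x

/-- The trigamma function ψ₁ = ψ'. -/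
noncomputable def trigamma (x : ℝ) : ℝ := deriv digamma x

/-!
The log-moments `M_k(a) = ∫₀¹ (log x)^k x^(a-1) (1-x)^(b-1) dx` satisfy `M_k' = M_{k+1}`
(differentiation in `a` under the integral), and `M_0(a) = B(a,b) = Γ(a)Γ(b)/Γ(a+b)`.
For `Y ~ Beta(a,b)` the mean of `log Y` is therefore `M_1/M_0 = (log B)'(a) = ψ(a) - ψ(a+b)`,
and its variance is `M_2/M_0 - (M_1/M_0)^2 = (M_1/M_0)'(a) = ψ₁(a) - ψ₁(a+b)`.
Since `log D_d` is the sum of the independent `log X_{d,j}`, the variances add, and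
`a + b = (d+1)/2` for every factor.
-/

open scoped Nat

namespace Real

theorem analyticAt_Gamma {x : ℝ} (hx : 0 < x) : AnalyticAt ℝ Gamma x := by
  have hΓ : AnalyticAt ℂ Complex.Gamma x := by
    refine Complex.analyticAt_iff_eventually_differentiableAt.2 ?_
    filter_upwards [(isOpen_lt continuous_const Complex.continuous_re).mem_nhds
      (show (0 : ℝ) < (x : ℂ).re by simpa)] with z hz
    exact (Complex.differentiableAt_Gamma z fun m hm => by
      simp only [hm, Complex.neg_re, Complex.natCast_re] at hz
      linarith [m.cast_nonneg (α := ℝ)])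
  simpa [Complex.Gamma_ofReal] using hΓ.re_ofReal

end Real

theorem analyticAt_digamma {x : ℝ} (hx : 0 < x) : AnalyticAt ℝ digamma x :=
  ((Real.analyticAt_Gamma hx).log (Real.Gamma_pos_of_pos hx)).deriv

theorem hasDerivAt_log_Gamma {x : ℝ} (hx : 0 < x) :
    HasDerivAt (fun y => log (Gamma y)) (digamma x) x :=
  ((Real.analyticAt_Gamma hx).log (Real.Gamma_pos_of_pos hx)).differentiableAt.hasDerivAt

theorem hasDerivAt_digamma {x : ℝ} (hx : 0 < x) : HasDerivAt digamma (trigamma x) x :=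
  (analyticAt_digamma hx).differentiableAt.hasDerivAt

theorem abs_log_pow_le {x s : ℝ} (hx : 0 < x) (hx₁ : x ≤ 1) (hs : 0 < s) (k : ℕ) :
    |log x| ^ k ≤ k ! / s ^ k * x ^ (-s) := by
  have h := pow_div_factorial_le_exp (x := s * |log x|) (mul_nonneg hs.le (abs_nonneg (log x))) k
  rw [abs_of_nonpos (log_nonpos hx.le hx₁), rpow_def_of_pos hx] at *
  rw [mul_pow, div_le_iff₀ (by positivity)] at h
  rw [div_mul_eq_mul_div, le_div_iff₀ (by positivity)]
  convert h using 1 <;> ring_nf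

theorem ofReal_cpow_mul_cpow {x : ℝ} (hx₀ : 0 ≤ x) (hx₁ : x ≤ 1) (a b : ℝ) :
    (x : ℂ) ^ ((a : ℂ) - 1) * (1 - (x : ℂ)) ^ ((b : ℂ) - 1)
      = ((x ^ (a - 1) * (1 - x) ^ (b - 1) : ℝ) : ℂ) := by
  push_cast
  rw [Complex.ofReal_cpow hx₀, Complex.ofReal_cpow (sub_nonneg.2 hx₁)]
  push_cast
  ring_nf

noncomputable def betaLogMoment (k : ℕ) (a b : ℝ) : ℝ :=
  ∫ x in Set.Ioo 0 1, log x ^ k * (x ^ (a - 1) * (1 - x) ^ (b - 1))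

theorem betaLogMoment_zero {a b : ℝ} (ha : 0 < a) (hb : 0 < b) :
    betaLogMoment 0 a b = beta a b := by
  rw [beta_eq_betaIntegralReal a b ha hb, Complex.betaIntegral,
    intervalIntegral.integral_of_le zero_le_one, setIntegral_congr_fun measurableSet_Ioc
      fun x hx => ofReal_cpow_mul_cpow hx.1.le hx.2 a b,
    integral_complex_ofReal, Complex.ofReal_re, integral_Ioc_eq_integral_Ioo]
  simp [betaLogMoment]

theorem integrableOn_abs_log_pow_mul_rpow_mul_rpow (k : ℕ) {a b : ℝ} (ha : 0 < a) (hb : 0 < b) :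
    IntegrableOn (fun x => |log x| ^ k * (x ^ (a - 1) * (1 - x) ^ (b - 1))) (Set.Ioo 0 1) := by
  have hbeta : IntegrableOn (fun x : ℝ => x ^ (a / 2 - 1) * (1 - x) ^ (b - 1)) (Set.Ioo 0 1) := by
    have h := Complex.betaIntegral_convergent (u := ((a / 2 : ℝ) : ℂ)) (v := (b : ℂ))
      (by simpa using half_pos ha) (by simpa)
    rw [intervalIntegrable_iff_integrableOn_Ioo_of_le zero_le_one] at h
    refine (integrableOn_congr_fun (fun x hx => ?_) measurableSet_Ioo).1 h.re
    rw [ofReal_cpow_mul_cpow hx.1.le hx.2.le]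
    rfl
  refine (hbeta.const_mul (k ! / (a / 2) ^ k)).mono' (by fun_prop) ?_
  filter_upwards [ae_restrict_mem measurableSet_Ioo] with x ⟨hx₀, hx₁⟩
  have hg : 0 ≤ x ^ (a - 1) * (1 - x) ^ (b - 1) := by positivity
  calc ‖|log x| ^ k * (x ^ (a - 1) * (1 - x) ^ (b - 1))‖
      = |log x| ^ k * (x ^ (a - 1) * (1 - x) ^ (b - 1)) := by
        rw [norm_mul, norm_pow, Real.norm_eq_abs, abs_abs, Real.norm_of_nonneg hg]
    _ ≤ k ! / (a / 2) ^ k * x ^ (-(a / 2)) * (x ^ (a - 1) * (1 - x) ^ (b - 1)) :=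
        mul_le_mul_of_nonneg_right (abs_log_pow_le hx₀ hx₁.le (half_pos ha) k) hg
    _ = k ! / (a / 2) ^ k * (x ^ (a / 2 - 1) * (1 - x) ^ (b - 1)) := by
        rw [mul_assoc, ← mul_assoc (x ^ _), ← rpow_add hx₀]
        ring_nf

theorem hasDerivAt_betaLogMoment (k : ℕ) {a b : ℝ} (ha : 0 < a) (hb : 0 < b) :
    HasDerivAt (fun s => betaLogMoment k s b) (betaLogMoment (k + 1) a b) a := by
  have hF_int : IntegrableOn (fun x => log x ^ k * (x ^ (a - 1) * (1 - x) ^ (b - 1)))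
      (Set.Ioo 0 1) :=
    (integrableOn_abs_log_pow_mul_rpow_mul_rpow k ha hb).mono' (by fun_prop) <| by
      filter_upwards [ae_restrict_mem measurableSet_Ioo] with x ⟨hx₀, hx₁⟩
      rw [norm_mul, norm_pow, Real.norm_eq_abs, Real.norm_of_nonneg (by positivity)]
  refine (hasDerivAt_integral_of_dominated_loc_of_deriv_le
    (F := fun s x => log x ^ k * (x ^ (s - 1) * (1 - x) ^ (b - 1)))
    (F' := fun s x => log x ^ (k + 1) * (x ^ (s - 1) * (1 - x) ^ (b - 1)))
    (Ioi_mem_nhds (half_lt_self ha))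
    (Eventually.of_forall fun s => by fun_prop) hF_int (by fun_prop) ?_
    (integrableOn_abs_log_pow_mul_rpow_mul_rpow (k + 1) (half_pos ha) hb) ?_).2
  · filter_upwards [ae_restrict_mem measurableSet_Ioo] with x ⟨hx₀, hx₁⟩ s hs
    rw [norm_mul, norm_pow, Real.norm_eq_abs, Real.norm_of_nonneg (by positivity)]
    gcongr ?_ * (?_ * _)
    exact rpow_le_rpow_of_exponent_ge hx₀ hx₁.le (by linarith [Set.mem_Ioi.1 hs])
  · filter_upwards [ae_restrict_mem measurableSet_Ioo] with x hx s _
    exact ((((hasDerivAt_id s).sub_const 1).const_rpow hx.1).mul_const ((1 - x) ^ (b - 1))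
      |>.const_mul (log x ^ k)).congr_deriv (by simp only [id]; ring)

theorem log_beta {a b : ℝ} (ha : 0 < a) (hb : 0 < b) :
    log (beta a b) = log (Gamma a) + log (Gamma b) - log (Gamma (a + b)) := by
  rw [beta, log_div (mul_pos (Gamma_pos_of_pos ha) (Gamma_pos_of_pos hb)).ne'
    (Gamma_pos_of_pos (add_pos ha hb)).ne',
    log_mul (Gamma_pos_of_pos ha).ne' (Gamma_pos_of_pos hb).ne']

theorem betaLogMoment_one_div_zero {a b : ℝ} (ha : 0 < a) (hb : 0 < b) :
    betaLogMoment 1 a b / betaLogMoment 0 a b = digamma a - digamma (a + b) := by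
  have hM : HasDerivAt (fun s => log (betaLogMoment 0 s b))
      (betaLogMoment 1 a b / betaLogMoment 0 a b) a :=
    (hasDerivAt_betaLogMoment 0 ha hb).log (betaLogMoment_zero ha hb ▸ beta_pos ha hb).ne'
  have hΓ : HasDerivAt (fun s => log (Gamma s) + log (Gamma b) - log (Gamma (s + b)))
      (digamma a - digamma (a + b)) a :=
    ((hasDerivAt_log_Gamma ha).add_const _).sub
      ((hasDerivAt_log_Gamma (add_pos ha hb)).comp_add_const a b)
  refine hM.unique (hΓ.congr_of_eventuallyEq ?_)
  filter_upwards [Ioi_mem_nhds ha] with s hs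
  rw [betaLogMoment_zero hs hb, log_beta hs hb]

theorem betaLogMoment_two_div_zero_sub_sq {a b : ℝ} (ha : 0 < a) (hb : 0 < b) :
    betaLogMoment 2 a b / betaLogMoment 0 a b - (betaLogMoment 1 a b / betaLogMoment 0 a b) ^ 2
      = trigamma a - trigamma (a + b) := by
  have hM₀ : betaLogMoment 0 a b ≠ 0 := (betaLogMoment_zero ha hb ▸ beta_pos ha hb).ne'
  have hM : HasDerivAt (fun s => betaLogMoment 1 s b / betaLogMoment 0 s b)
      ((betaLogMoment 2 a b * betaLogMoment 0 a b - betaLogMoment 1 a b * betaLogMoment 1 a b)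
        / betaLogMoment 0 a b ^ 2) a :=
    (hasDerivAt_betaLogMoment 1 ha hb).div (hasDerivAt_betaLogMoment 0 ha hb) hM₀
  have hψ : HasDerivAt (fun s => digamma s - digamma (s + b)) (trigamma a - trigamma (a + b)) a :=
    (hasDerivAt_digamma ha).sub ((hasDerivAt_digamma (add_pos ha hb)).comp_add_const a b)
  rw [(hψ.congr_of_eventuallyEq ?_).unique hM]
  · field_simp
  · filter_upwards [Ioi_mem_nhds ha] with s hs
    exact betaLogMoment_one_div_zero hs hb

theorem betaMeasure_eq_withDensity_restrict (a b : ℝ) :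
    _root_.betaMeasure a b = (volume.restrict (Set.Ioo 0 1)).withDensity
      fun x => ENNReal.ofReal (x ^ (a - 1) * (1 - x) ^ (b - 1) / beta a b) := by
  rw [← withDensity_indicator measurableSet_Ioo, _root_.betaMeasure]
  congr 1 with x
  by_cases hx : x ∈ Set.Ioo (0 : ℝ) 1 <;> simp [hx, beta]

theorem toReal_betaDensity_smul {a b x : ℝ} (ha : 0 < a) (hb : 0 < b) (hx : x ∈ Set.Ioo 0 1)
    (y : ℝ) : (ENNReal.ofReal (x ^ (a - 1) * (1 - x) ^ (b - 1) / beta a b)).toReal • y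
      = y * (x ^ (a - 1) * (1 - x) ^ (b - 1)) / beta a b := by
  have hx₀ : 0 < x := hx.1
  have hx₁ : 0 < 1 - x := sub_pos.2 hx.2
  have hB : 0 < beta a b := beta_pos ha hb
  rw [ENNReal.toReal_ofReal (by positivity), smul_eq_mul]
  ring

theorem integral_betaMeasure {a b : ℝ} (ha : 0 < a) (hb : 0 < b) (f : ℝ → ℝ) :
    ∫ x, f x ∂_root_.betaMeasure a b
      = (∫ x in Set.Ioo 0 1, f x * (x ^ (a - 1) * (1 - x) ^ (b - 1))) / beta a b := by
  rw [betaMeasure_eq_withDensity_restrict, integral_withDensity_eq_integral_toReal_smul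
    (by fun_prop) (ae_of_all _ fun _ => ENNReal.ofReal_lt_top),
    setIntegral_congr_fun measurableSet_Ioo fun x hx => toReal_betaDensity_smul ha hb hx (f x),
    integral_div]

theorem integrable_betaMeasure_of_integrableOn {a b : ℝ} (ha : 0 < a) (hb : 0 < b)
    {f : ℝ → ℝ} (hf : IntegrableOn (fun x => f x * (x ^ (a - 1) * (1 - x) ^ (b - 1)))
      (Set.Ioo 0 1)) :
    Integrable f (_root_.betaMeasure a b) := by
  rw [betaMeasure_eq_withDensity_restrict, integrable_withDensity_iff_integrable_smul'
    (by fun_prop) (ae_of_all _ fun _ => ENNReal.ofReal_lt_top)]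
  exact (integrableOn_congr_fun (fun x hx => (toReal_betaDensity_smul ha hb hx (f x)).symm)
    measurableSet_Ioo).1 (hf.div_const _)

theorem ae_mem_Ioo_betaMeasure (a b : ℝ) :
    ∀ᵐ x ∂_root_.betaMeasure a b, x ∈ Set.Ioo 0 1 := by
  rw [betaMeasure_eq_withDensity_restrict]
  exact (withDensity_absolutelyContinuous _ _).ae_le (ae_restrict_mem measurableSet_Ioo)

theorem betaMeasure_eq_betaMeasure (a b : ℝ) :
    _root_.betaMeasure a b = ProbabilityTheory.betaMeasure a b := by
  rw [_root_.betaMeasure, ProbabilityTheory.betaMeasure]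
  congr 1 with x
  simp only [betaPDF, betaPDFReal, Set.mem_Ioo, beta]
  split_ifs <;> ring_nf

theorem isProbabilityMeasure_betaMeasure {a b : ℝ} (ha : 0 < a) (hb : 0 < b) :
    IsProbabilityMeasure (_root_.betaMeasure a b) :=
  betaMeasure_eq_betaMeasure a b ▸ isProbabilityMeasureBeta ha hb

theorem memLp_log_betaMeasure {a b : ℝ} (ha : 0 < a) (hb : 0 < b) :
    MemLp log 2 (_root_.betaMeasure a b) := by
  refine (memLp_two_iff_integrable_sq measurable_log.aestronglyMeasurable).2
    (integrable_betaMeasure_of_integrableOn ha hb ?_)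
  simpa only [sq_abs] using integrableOn_abs_log_pow_mul_rpow_mul_rpow 2 ha hb

theorem variance_log_betaMeasure {a b : ℝ} (ha : 0 < a) (hb : 0 < b) :
    Var[log; _root_.betaMeasure a b] = trigamma a - trigamma (a + b) := by
  have := isProbabilityMeasure_betaMeasure ha hb
  rw [variance_eq_sub (memLp_log_betaMeasure ha hb), Pi.pow_def, integral_betaMeasure ha hb,
    integral_betaMeasure ha hb, ← betaLogMoment_zero ha hb]
  simpa only [betaLogMoment, pow_one] using betaLogMoment_two_div_zero_sub_sq ha hb

namespace HasBetaDist

variable {Ω : Type*} [MeasurableSpace Ω] {P : Measure Ω} {Y : Ω → ℝ} {a b : ℝ}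

theorem ae_pos (h : HasBetaDist P Y a b) : ∀ᵐ ω ∂P, 0 < Y ω :=
  ae_of_ae_map h.1.aemeasurable <| h.2 ▸ (ae_mem_Ioo_betaMeasure a b).mono fun _ hx => hx.1

theorem memLp_log (h : HasBetaDist P Y a b) (ha : 0 < a) (hb : 0 < b) :
    MemLp (fun ω => log (Y ω)) 2 P :=
  (memLp_map_measure_iff measurable_log.aestronglyMeasurable h.1.aemeasurable).1
    (h.2 ▸ memLp_log_betaMeasure ha hb)

theorem variance_log (h : HasBetaDist P Y a b) (ha : 0 < a) (hb : 0 < b) :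
    Var[fun ω => log (Y ω); P] = trigamma a - trigamma (a + b) := by
  rw [← variance_log_betaMeasure ha hb, ← h.2]
  exact (variance_map measurable_log.aemeasurable h.1.aemeasurable).symm

end HasBetaDist

theorem variance_log_prod {Ω ι : Type*} [MeasurableSpace Ω] {P : Measure Ω} {s : Finset ι}
    {Y : ι → Ω → ℝ} (hpos : ∀ i ∈ s, ∀ᵐ ω ∂P, 0 < Y i ω)
    (hY : ∀ i ∈ s, MemLp (fun ω => log (Y i ω)) 2 P)
    (hindep : (s : Set ι).Pairwise fun i j => IndepFun (Y i) (Y j) P) :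
    Var[fun ω => log (∏ i ∈ s, Y i ω); P] = ∑ i ∈ s, Var[fun ω => log (Y i ω); P] := by
  have hlog : (fun ω => log (∏ i ∈ s, Y i ω))
      =ᵐ[P] ∑ i ∈ s, fun ω => log (Y i ω) := by
    filter_upwards [(eventually_all_finset s).2 hpos] with ω hω
    rw [log_prod fun i hi => (hω i hi).ne', Finset.sum_apply]
  rw [variance_congr hlog, IndepFun.variance_sum hY
    fun i hi j hj hij => (hindep hi hj hij).comp measurable_log measurable_log]

theorem stmt15_general
    {Ω : Type*} [MeasurableSpace Ω] (P : Measure Ω)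
    (X : ℕ → ℕ → Ω → ℝ)
    (hindep : ∀ d : ℕ, 2 ≤ d →
      iIndepFun
        (fun j : {j : ℕ // 1 ≤ j ∧ j ≤ d - 1} => X d j) P)
    (hX : ∀ d j : ℕ, 2 ≤ d → 1 ≤ j → j ≤ d - 1 →
      HasBetaDist P (X d j) (((j : ℝ) + 1) / 2) (((d : ℝ) - (j : ℝ)) / 2)) :
    ∀ d : ℕ, 2 ≤ d →
      variance (fun ω => Real.log (∏ j ∈ Finset.Icc 1 (d - 1), X d j ω)) P = ∑ j ∈ Finset.Icc 1 (d - 1), (trigamma (((j : ℝ) + 1) / 2) - trigamma (((d : ℝ) + 1) / 2)) := by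
  intro d hd
  have hβ : ∀ j ∈ Icc 1 (d - 1),
      HasBetaDist P (X d j) (((j : ℝ) + 1) / 2) (((d : ℝ) - j) / 2) :=
    fun j hj => hX d j hd (mem_Icc.1 hj).1 (mem_Icc.1 hj).2
  have hb : ∀ j ∈ Icc 1 (d - 1), (0 : ℝ) < ((d : ℝ) - j) / 2 := fun j hj => by
    have : (j : ℝ) < d := by exact_mod_cast (show j < d by grind)
    linarith
  have hpair : (Icc 1 (d - 1) : Set ℕ).Pairwise fun i j => IndepFun (X d i) (X d j) P :=
    fun i hi j hj hij => (hindep d hd).indepFun (i := ⟨i, mem_Icc.1 hi⟩)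
      (j := ⟨j, mem_Icc.1 hj⟩) (by simpa using hij)
  rw [variance_log_prod (fun j hj => (hβ j hj).ae_pos)
    (fun j hj => (hβ j hj).memLp_log (by positivity) (hb j hj)) hpair]
  refine sum_congr rfl fun j hj => ?_
  rw [(hβ j hj).variance_log (by positivity) (hb j hj)]
  congr 2
  ring

theorem stmt15
    {Ω : Type*} [MeasurableSpace Ω] (P : Measure Ω) [IsProbabilityMeasure P]
    (X : ℕ → ℕ → Ω → ℝ)
    (hindep : ∀ d : ℕ, 2 ≤ d →
      iIndepFun
        (fun j : {j : ℕ // 1 ≤ j ∧ j ≤ d - 1} => X d j) P)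
    (hX : ∀ d j : ℕ, 2 ≤ d → 1 ≤ j → j ≤ d - 1 →
      HasBetaDist P (X d j) (((j : ℝ) + 1) / 2) (((d : ℝ) - (j : ℝ)) / 2)) :
    ∀ d : ℕ, 2 ≤ d →
      variance (fun ω => Real.log (∏ j ∈ Finset.Icc 1 (d - 1), X d j ω)) P = ∑ j ∈ Finset.Icc 1 (d - 1), (trigamma (((j : ℝ) + 1) / 2) - trigamma (((d : ℝ) + 1) / 2)) :=
  stmt15_general P X hindep hX
end
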